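/- arXiv:1405.7756 — 2 statements merged into one kernel-verified Lean document; each statement's English description precedes it below -/
import Mathlib

section
/- Define G₂¹(x,y) = y₂(y₁+x₁)/(|y+x|²·|y−x̃|²) where x̃ = (−x₁,x₂). Then for all x, y ∈ [0,1]² with x ≠ y and x₁, x₂ > 0, |G₂¹(x,y)| ≤ C·|y−x|⁻¹·x₂⁻¹ for some absolute constant C. -/
open Real

theorem stmt_6 :
    ∃ C : ℝ, 0 < C ∧ ∀ x₁ x₂ y₁ y₂ : ℝ,
      x₁ ∈ Set.Icc (0:ℝ) 1 → x₂ ∈ Set.Icc (0:ℝ) 1 →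
      y₁ ∈ Set.Icc (0:ℝ) 1 → y₂ ∈ Set.Icc (0:ℝ) 1 →
      0 < x₁ → 0 < x₂ → (x₁, x₂) ≠ (y₁, y₂) →
      |y₂ * (y₁ + x₁) / (((y₁ + x₁)^2 + (y₂ + x₂)^2) * ((y₁ + x₁)^2 + (y₂ - x₂)^2))|
        ≤ C * (Real.sqrt ((y₁ - x₁)^2 + (y₂ - x₂)^2))⁻¹ * x₂⁻¹ := by
  refine ⟨1, one_pos, fun x₁ x₂ y₁ y₂ hx₁ hx₂ hy₁ hy₂ hx₁p hx₂p hne => ?_⟩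
  obtain ⟨hx₁0, hx₁1⟩ := hx₁
  obtain ⟨hx₂0, hx₂1⟩ := hx₂
  obtain ⟨hy₁0, hy₁1⟩ := hy₁
  obtain ⟨hy₂0, hy₂1⟩ := hy₂
  have hSpos : 0 < (y₁ - x₁)^2 + (y₂ - x₂)^2 := by
    rcases lt_or_ge 0 ((y₁ - x₁)^2 + (y₂ - x₂)^2) with h | h
    · exact h
    · exfalso
      have e1 : y₁ = x₁ := by nlinarith [sq_nonneg (y₁ - x₁), sq_nonneg (y₂ - x₂)]
      have e2 : y₂ = x₂ := by nlinarith [sq_nonneg (y₁ - x₁), sq_nonneg (y₂ - x₂)]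
      exact hne (by simp [e1, e2])
  have hD₁pos : 0 < (y₁ + x₁)^2 + (y₂ + x₂)^2 := by nlinarith [sq_nonneg (y₁ + x₁)]
  have hD₂pos : 0 < (y₁ + x₁)^2 + (y₂ - x₂)^2 := by nlinarith [sq_nonneg (y₂ - x₂)]
  have hsS : 0 < Real.sqrt ((y₁ - x₁)^2 + (y₂ - x₂)^2) := Real.sqrt_pos.mpr hSpos
  have hsqD₁ : (Real.sqrt ((y₁ + x₁)^2 + (y₂ + x₂)^2))^2 = (y₁ + x₁)^2 + (y₂ + x₂)^2 :=
    Real.sq_sqrt hD₁pos.le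
  have hsqD₂ : (Real.sqrt ((y₁ + x₁)^2 + (y₂ - x₂)^2))^2 = (y₁ + x₁)^2 + (y₂ - x₂)^2 :=
    Real.sq_sqrt hD₂pos.le
  have hd₁ : 0 ≤ Real.sqrt ((y₁ + x₁)^2 + (y₂ + x₂)^2) := Real.sqrt_nonneg _
  have hd₂ : 0 ≤ Real.sqrt ((y₁ + x₁)^2 + (y₂ - x₂)^2) := Real.sqrt_nonneg _
  have hy₂d : y₂ ≤ Real.sqrt ((y₁ + x₁)^2 + (y₂ + x₂)^2) := by
    have h := Real.sqrt_le_sqrt (show y₂^2 ≤ (y₁ + x₁)^2 + (y₂ + x₂)^2 by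
      nlinarith [sq_nonneg (y₁ + x₁)])
    rwa [Real.sqrt_sq hy₂0] at h
  have hx₂d : x₂ ≤ Real.sqrt ((y₁ + x₁)^2 + (y₂ + x₂)^2) := by
    have h := Real.sqrt_le_sqrt (show x₂^2 ≤ (y₁ + x₁)^2 + (y₂ + x₂)^2 by
      nlinarith [sq_nonneg (y₁ + x₁)])
    rwa [Real.sqrt_sq hx₂0] at h
  have hyx₁d : y₁ + x₁ ≤ Real.sqrt ((y₁ + x₁)^2 + (y₂ - x₂)^2) := by
    have h := Real.sqrt_le_sqrt (show (y₁ + x₁)^2 ≤ (y₁ + x₁)^2 + (y₂ - x₂)^2 by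
      nlinarith [sq_nonneg (y₂ - x₂)])
    rwa [Real.sqrt_sq (by linarith)] at h
  have hSd : Real.sqrt ((y₁ - x₁)^2 + (y₂ - x₂)^2)
      ≤ Real.sqrt ((y₁ + x₁)^2 + (y₂ - x₂)^2) := by
    apply Real.sqrt_le_sqrt
    nlinarith [mul_nonneg hx₁0 hy₁0]
  have habs : |y₂ * (y₁ + x₁) / (((y₁ + x₁)^2 + (y₂ + x₂)^2) * ((y₁ + x₁)^2 + (y₂ - x₂)^2))|
      = y₂ * (y₁ + x₁) / (((y₁ + x₁)^2 + (y₂ + x₂)^2) * ((y₁ + x₁)^2 + (y₂ - x₂)^2)) := by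
    apply abs_of_nonneg
    apply div_nonneg
    · exact mul_nonneg hy₂0 (by linarith)
    · exact (mul_pos hD₁pos hD₂pos).le
  rw [habs, one_mul, ← one_div, ← one_div, div_mul_div_comm, one_mul,
      div_le_div_iff₀ (mul_pos hD₁pos hD₂pos) (mul_pos hsS hx₂p)]
  calc y₂ * (y₁ + x₁) * (Real.sqrt ((y₁ - x₁)^2 + (y₂ - x₂)^2) * x₂)
      ≤ (Real.sqrt ((y₁ + x₁)^2 + (y₂ + x₂)^2) * Real.sqrt ((y₁ + x₁)^2 + (y₂ - x₂)^2)) *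
        (Real.sqrt ((y₁ + x₁)^2 + (y₂ - x₂)^2) * Real.sqrt ((y₁ + x₁)^2 + (y₂ + x₂)^2)) :=
        mul_le_mul (mul_le_mul hy₂d hyx₁d (by linarith) hd₁)
          (mul_le_mul hSd hx₂d hx₂p.le hd₂)
          (mul_nonneg hsS.le hx₂p.le) (mul_nonneg hd₁ hd₂)
    _ = 1 * (((y₁ + x₁)^2 + (y₂ + x₂)^2) * ((y₁ + x₁)^2 + (y₂ - x₂)^2)) := by
        linear_combination (Real.sqrt ((y₁ + x₁)^2 + (y₂ - x₂)^2))^2 * hsqD₁ +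
          ((y₁ + x₁)^2 + (y₂ + x₂)^2) * hsqD₂
end

section
/- For x ∈ D = (0,δ₁)×(0,δ₂) and y ∈ [0,1]², the kernel bound |G₂ᵏ(x,y)| ≤ C·|x−y|⁻¹·|y−x̄|⁻¹ (k = 1,2, x̄ = (x₁,−x₂)) together with |y − x̄| ≥ |y − x| for x,y ∈ [0,1]² implies that for any M ≥ 0 and α ∈ (0,1), if |ω(y)| ≤ M·y₂^{1−α} on D̂, then ∫_{D̂} |G₂ᵏ(x,y)||ω(y)| dy ≤ C(α)·M·|δ|^{1−α}, where |δ| = (δ₁² + δ₂²)^{1/2} and D̂ = (0,δ₁+δ₃)×(0,δ₂) with 0<δ₁<δ₂<δ₁+δ₃. -/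
set_option maxHeartbeats 1000000


open Real MeasureTheory

open Set Filter in
private lemma aux_inner {α : ℝ} (hα0 : 0 < α) (c b : ℝ) (hb : 0 < b) :
    Integrable (fun u : ℝ => (|u - c| + b) ^ (-(1 + α))) volume ∧
      ∫ u : ℝ, (|u - c| + b) ^ (-(1 + α)) = 2 / α * b ^ (-α) := by
  set F : ℝ → ℝ := fun t => (t + b) ^ (-(1 + α)) with hF
  have hderiv : ∀ t ∈ Ici (0:ℝ), HasDerivAt (fun t : ℝ => -((t + b) ^ (-α) / α)) (F t) t := by
    intro t ht
    have ht0 : (0:ℝ) ≤ t := ht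
    have htb : (0:ℝ) < t + b := by linarith
    have h1 : HasDerivAt (fun t : ℝ => t + b) 1 t := (hasDerivAt_id t).add_const b
    have h2 := h1.rpow_const (p := -α) (Or.inl htb.ne')
    have h3 : HasDerivAt (fun t : ℝ => -((t + b) ^ (-α) / α)) _ t := (h2.div_const α).neg
    convert h3 using 1
    rw [hF]
    simp only
    rw [show (-(1 + α) : ℝ) = -α - 1 by ring]
    field_simp
  have g'pos : ∀ t ∈ Ioi (0:ℝ), 0 ≤ F t := by
    intro t ht
    exact rpow_nonneg (by have : (0:ℝ) < t := ht; linarith) _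
  have htends : Tendsto (fun t : ℝ => -((t + b) ^ (-α) / α)) atTop (nhds 0) := by
    have h0 : Tendsto (fun t : ℝ => t + b) atTop atTop :=
      tendsto_atTop_add_const_right _ b tendsto_id
    have h1 := (tendsto_rpow_neg_atTop hα0).comp h0
    have h2 := (h1.div_const α).neg
    simpa using h2
  have hIoi : IntegrableOn F (Ioi 0) :=
    integrableOn_Ioi_deriv_of_nonneg' hderiv g'pos htends
  have hval : ∫ t in Ioi (0:ℝ), F t = b ^ (-α) / α := by
    rw [integral_Ioi_of_hasDerivAt_of_nonneg' hderiv g'pos htends]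
    simp
  have habs_Ioi : IntegrableOn (fun u : ℝ => (|u| + b) ^ (-(1 + α))) (Ioi 0) :=
    (integrableOn_congr_fun (fun u hu => by
      rw [abs_of_pos (show (0:ℝ) < u from hu)]) measurableSet_Ioi).2 hIoi
  have habs_Iic : IntegrableOn (fun u : ℝ => (|u| + b) ^ (-(1 + α))) (Iic 0) := by
    rw [← Measure.map_neg_eq_self (volume : Measure ℝ)]
    have m : MeasurableEmbedding fun x : ℝ => -x := (Homeomorph.neg ℝ).measurableEmbedding
    rw [m.integrableOn_map_iff]
    simp_rw [Function.comp_def, abs_neg, neg_preimage, neg_Iic, neg_zero]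
    exact (integrableOn_Ici_iff_integrableOn_Ioi).mpr habs_Ioi
  have habs : Integrable (fun u : ℝ => (|u| + b) ^ (-(1 + α))) volume := by
    have h := habs_Iic.union habs_Ioi
    rwa [Iic_union_Ioi, integrableOn_univ] at h
  have hvalabs : ∫ u : ℝ, (|u| + b) ^ (-(1 + α)) = 2 / α * b ^ (-α) := by
    have h := integral_comp_abs (f := F)
    have h' : ∫ u : ℝ, (|u| + b) ^ (-(1 + α)) = 2 * ∫ t in Ioi (0:ℝ), F t := h
    rw [h', hval]
    ring
  constructor
  · exact habs.comp_sub_right c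
  · have h := integral_sub_right_eq_self (μ := (volume : Measure ℝ))
      (fun u : ℝ => (|u| + b) ^ (-(1 + α))) c
    have h' : ∫ u : ℝ, (|u - c| + b) ^ (-(1 + α)) = ∫ u : ℝ, (|u| + b) ^ (-(1 + α)) := h
    rw [h', hvalabs]

open Set intervalIntegral in
private lemma aux_outer {α : ℝ} (hα0 : 0 < α) (hα1 : α < 1) {c δ : ℝ} (hc : 0 < c)
    (hcδ : c < δ) :
    IntegrableOn (fun v : ℝ => |v - c| ^ (-α)) (Ioo 0 δ) volume ∧
      ∫ v in Ioo (0:ℝ) δ, |v - c| ^ (-α) ≤ 2 / (1 - α) * δ ^ (1 - α) := by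
  have hneg1 : (-1:ℝ) < -α := by linarith
  have h0c : (0:ℝ) ≤ c := hc.le
  have hcδ' : c ≤ δ := hcδ.le
  have h0δ : (0:ℝ) < δ := hc.trans hcδ
  have hα1' : (0:ℝ) < 1 - α := by linarith
  -- left piece
  have hEq1 : EqOn (fun v : ℝ => |v - c| ^ (-α)) (fun v : ℝ => (c - v) ^ (-α)) (Icc 0 c) := by
    intro v hv
    simp only
    rw [abs_of_nonpos (by linarith [hv.2] : v - c ≤ 0), neg_sub]
  have hEq2 : EqOn (fun v : ℝ => |v - c| ^ (-α)) (fun v : ℝ => (v - c) ^ (-α)) (Icc c δ) := by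
    intro v hv
    simp only
    rw [abs_of_nonneg (by linarith [hv.1] : 0 ≤ v - c)]
  have hI1 : IntervalIntegrable (fun v : ℝ => (c - v) ^ (-α)) volume 0 c := by
    have h := (intervalIntegrable_rpow' (a := c) (b := 0) hneg1).comp_sub_left c
    simpa using h
  have hI2 : IntervalIntegrable (fun v : ℝ => (v - c) ^ (-α)) volume c δ := by
    have h := (intervalIntegrable_rpow' (a := 0) (b := δ - c) hneg1).comp_sub_right c
    simpa using h
  have hq1 : IntervalIntegrable (fun v : ℝ => |v - c| ^ (-α)) volume 0 c := by
    rw [intervalIntegrable_iff_integrableOn_Ioc_of_le h0c] at hI1 ⊢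
    exact (integrableOn_congr_fun (hEq1.mono Ioc_subset_Icc_self) measurableSet_Ioc).2 hI1
  have hq2 : IntervalIntegrable (fun v : ℝ => |v - c| ^ (-α)) volume c δ := by
    rw [intervalIntegrable_iff_integrableOn_Ioc_of_le hcδ'] at hI2 ⊢
    exact (integrableOn_congr_fun (hEq2.mono Ioc_subset_Icc_self) measurableSet_Ioc).2 hI2
  constructor
  · have h := (hq1.1).union (hq2.1)
    rw [Ioc_union_Ioc_eq_Ioc h0c hcδ'] at h
    exact h.mono_set Ioo_subset_Ioc_self
  · have hval1 : ∫ v in (0:ℝ)..c, |v - c| ^ (-α) = c ^ (1 - α) / (1 - α) := by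
      rw [integral_congr (hEq1.mono (by rw [uIcc_of_le h0c]))]
      rw [integral_comp_sub_left (fun x : ℝ => x ^ (-α)) c]
      simp only [sub_self, sub_zero]
      rw [integral_rpow (Or.inl hneg1), Real.zero_rpow (by linarith : (-α) + 1 ≠ 0),
        show (-α + 1 : ℝ) = 1 - α by ring]
      ring
    have hval2 : ∫ v in c..δ, |v - c| ^ (-α) = (δ - c) ^ (1 - α) / (1 - α) := by
      rw [integral_congr (hEq2.mono (by rw [uIcc_of_le hcδ']))]
      rw [integral_comp_sub_right (fun x : ℝ => x ^ (-α)) c]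
      simp only [sub_self]
      rw [integral_rpow (Or.inl hneg1), Real.zero_rpow (by linarith : (-α) + 1 ≠ 0),
        show (-α + 1 : ℝ) = 1 - α by ring]
      ring
    have hsplit : ∫ v in Ioo (0:ℝ) δ, |v - c| ^ (-α)
        = c ^ (1 - α) / (1 - α) + (δ - c) ^ (1 - α) / (1 - α) := by
      rw [← integral_Ioc_eq_integral_Ioo, ← integral_of_le h0δ.le,
        ← integral_add_adjacent_intervals hq1 hq2, hval1, hval2]
    rw [hsplit]
    have hb1 : c ^ (1 - α) ≤ δ ^ (1 - α) := Real.rpow_le_rpow h0c hcδ' hα1'.le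
    have hb2 : (δ - c) ^ (1 - α) ≤ δ ^ (1 - α) :=
      Real.rpow_le_rpow (by linarith) (by linarith) hα1'.le
    have h2 : 2 / (1 - α) * δ ^ (1 - α) = δ ^ (1 - α) / (1 - α) + δ ^ (1 - α) / (1 - α) := by
      ring
    rw [h2]
    exact add_le_add ((div_le_div_iff_of_pos_right hα1').2 hb1) ((div_le_div_iff_of_pos_right hα1').2 hb2)

theorem stmt_17 (α C₀ : ℝ) (hα : α ∈ Set.Ioo (0:ℝ) 1) (hC₀ : 0 < C₀) :
    ∃ C : ℝ, 0 < C ∧ ∀ δ₁ δ₂ δ₃ : ℝ,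
      0 < δ₁ → δ₁ < δ₂ → δ₂ < δ₁ + δ₃ → δ₁ + δ₃ ≤ 1 →
      ∀ G : ℝ × ℝ → ℝ × ℝ → ℝ, ∀ ω : ℝ × ℝ → ℝ, ∀ M : ℝ,
      0 ≤ M →
      (∀ x ∈ Set.Ioo (0:ℝ) δ₁ ×ˢ Set.Ioo (0:ℝ) δ₂,
       ∀ y ∈ Set.Icc (0:ℝ) 1 ×ˢ Set.Icc (0:ℝ) 1,
        |G x y| ≤ C₀ * (Real.sqrt ((x.1 - y.1)^2 + (x.2 - y.2)^2))⁻¹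
                     * (Real.sqrt ((y.1 - x.1)^2 + (y.2 + x.2)^2))⁻¹) →
      (∀ y ∈ Set.Ioo (0:ℝ) (δ₁ + δ₃) ×ˢ Set.Ioo (0:ℝ) δ₂, |ω y| ≤ M * y.2 ^ (1 - α)) →
      ∀ x ∈ Set.Ioo (0:ℝ) δ₁ ×ˢ Set.Ioo (0:ℝ) δ₂,
        (∫ y in Set.Ioo (0:ℝ) (δ₁ + δ₃) ×ˢ Set.Ioo (0:ℝ) δ₂, |G x y| * |ω y|)
          ≤ C * M * (Real.sqrt (δ₁^2 + δ₂^2)) ^ (1 - α) := by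
  obtain ⟨hα0, hα1⟩ := hα
  have hα1' : (0:ℝ) < 1 - α := by linarith
  refine ⟨16 * C₀ / (α * (1 - α)), by positivity, ?_⟩
  intro δ₁ δ₂ δ₃ h1 h2 h3 h4 G ω M hM hG hω x hx
  obtain ⟨hx1, hx2⟩ := hx
  have hx21 : 0 < x.2 := hx2.1
  have hx22 : x.2 < δ₂ := hx2.2
  set S : Set (ℝ × ℝ) := Set.Ioo (0:ℝ) (δ₁ + δ₃) ×ˢ Set.Ioo (0:ℝ) δ₂ with hSdef
  set K : ℝ := 4 * C₀ * M with hKdef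
  set gfun : ℝ × ℝ → ℝ := fun y => K * (|y.1 - x.1| + |y.2 - x.2|) ^ (-(1 + α)) with hgdef
  have hKnn : 0 ≤ K := by positivity
  have hgnn : ∀ y, 0 ≤ gfun y :=
    fun y => mul_nonneg hKnn (Real.rpow_nonneg (by positivity) _)
  have hmeas : Measurable gfun := by fun_prop
  -- a.e. v ≠ x.2
  have hne : ∀ᵐ v ∂(volume.restrict (Set.Ioo (0:ℝ) δ₂)), v ≠ x.2 := by
    apply ae_restrict_of_ae
    refine ae_iff.mpr ?_
    rw [show {a : ℝ | ¬ a ≠ x.2} = {x.2} by ext a; simp]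
    exact measure_singleton _
  -- product integrability
  have hprod : Integrable gfun (volume.prod (volume.restrict (Set.Ioo (0:ℝ) δ₂))) := by
    rw [integrable_prod_iff' hmeas.aestronglyMeasurable]
    constructor
    · filter_upwards [hne] with v hv
      have hb : 0 < |v - x.2| := abs_pos.2 (sub_ne_zero.2 hv)
      exact (aux_inner hα0 x.1 _ hb).1.const_mul _
    · have heq : (fun v => (K * (2 / α)) * |v - x.2| ^ (-α))
          =ᵐ[volume.restrict (Set.Ioo (0:ℝ) δ₂)] (fun v => ∫ u, ‖gfun (u, v)‖) := by
        filter_upwards [hne] with v hv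
        have hb : 0 < |v - x.2| := abs_pos.2 (sub_ne_zero.2 hv)
        have h1' : ∀ u : ℝ, ‖gfun (u, v)‖ = gfun (u, v) := fun u => by
          rw [Real.norm_eq_abs, abs_of_nonneg (hgnn _)]
        simp only [h1']
        simp only [hgdef]
        rw [MeasureTheory.integral_const_mul, (aux_inner hα0 x.1 _ hb).2]
        ring
      exact Integrable.congr
        (((aux_outer hα0 hα1 hx21 hx22).1.const_mul (K * (2 / α)))) heq
  have hrestr : ((volume : Measure (ℝ × ℝ))).restrict (Set.univ ×ˢ Set.Ioo (0:ℝ) δ₂)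
      = (volume : Measure ℝ).prod (volume.restrict (Set.Ioo (0:ℝ) δ₂)) := by
    rw [Measure.volume_eq_prod, ← Measure.prod_restrict, Measure.restrict_univ]
  have hT : IntegrableOn gfun (Set.univ ×ˢ Set.Ioo (0:ℝ) δ₂) := by
    rw [IntegrableOn, hrestr]; exact hprod
  have hSsub : S ⊆ Set.univ ×ˢ Set.Ioo (0:ℝ) δ₂ :=
    Set.prod_mono (Set.subset_univ _) subset_rfl
  have hSint : IntegrableOn gfun S := hT.mono_set hSsub
  -- pointwise bound
  have hpoint : ∀ y ∈ S, |G x y| * |ω y| ≤ gfun y := by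
    intro y hy
    have hy1 := hy.1
    have hy2 := hy.2
    have hy21 : 0 < y.2 := hy2.1
    have hy22 : y.2 < δ₂ := hy2.2
    have hy_box : y ∈ Set.Icc (0:ℝ) 1 ×ˢ Set.Icc (0:ℝ) 1 :=
      ⟨⟨hy1.1.le, le_trans hy1.2.le h4⟩, ⟨hy21.le, by linarith⟩⟩
    have hg := hG x ⟨hx1, hx2⟩ y hy_box
    have hw := hω y hy
    set d : ℝ := Real.sqrt ((x.1 - y.1)^2 + (x.2 - y.2)^2) with hd_def
    set e : ℝ := Real.sqrt ((y.1 - x.1)^2 + (y.2 + x.2)^2) with he_def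
    have step1 : |G x y| * |ω y| ≤ (C₀ * d⁻¹ * e⁻¹) * (M * y.2 ^ (1 - α)) := by
      apply mul_le_mul hg hw (abs_nonneg _)
      have hd0 : 0 ≤ d := Real.sqrt_nonneg _
      have he0 : 0 ≤ e := Real.sqrt_nonneg _
      positivity
    refine le_trans step1 ?_
    rcases eq_or_lt_of_le (Real.sqrt_nonneg ((x.1 - y.1)^2 + (x.2 - y.2)^2)) with hd0 | hd0
    · have hz : (C₀ * d⁻¹ * e⁻¹) * (M * y.2 ^ (1 - α)) = 0 := by
        rw [hd_def, ← hd0, inv_zero]; ring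
      rw [hz]; exact hgnn y
    · have hdpos : 0 < d := hd0
      have hee : y.2 + x.2 ≤ e := by
        rw [he_def]
        exact (Real.le_sqrt (by positivity) (by positivity)).2
          (by nlinarith [sq_nonneg (y.1 - x.1)])
      have hepos : 0 < e := lt_of_lt_of_le (by positivity) hee
      have hy2e : y.2 ≤ e := by linarith
      have hde : d ≤ e := by
        rw [hd_def, he_def]
        apply Real.sqrt_le_sqrt
        nlinarith [mul_pos hx21 hy21]
      have hbase : 0 < |y.1 - x.1| + |y.2 - x.2| := by
        by_contra hb
        push_neg at hb
        have e1 : |y.1 - x.1| = 0 :=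
          le_antisymm (by linarith [abs_nonneg (y.2 - x.2)]) (abs_nonneg _)
        have e2 : |y.2 - x.2| = 0 :=
          le_antisymm (by linarith [abs_nonneg (y.1 - x.1)]) (abs_nonneg _)
        have h1' := abs_eq_zero.1 e1
        have h2' := abs_eq_zero.1 e2
        have hx1y : x.1 - y.1 = 0 := by linarith [sub_eq_zero.1 h1']
        have hx2y : x.2 - y.2 = 0 := by linarith [sub_eq_zero.1 h2']
        have : d = 0 := by rw [hd_def, hx1y, hx2y]; norm_num
        exact absurd this hdpos.ne'
      set base : ℝ := |y.1 - x.1| + |y.2 - x.2| with hbase_def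
      have key : d⁻¹ * (e⁻¹ * y.2 ^ (1 - α)) ≤ 4 * base ^ (-(1 + α)) := by
        have c1 : e⁻¹ * y.2 ^ (1 - α) ≤ e⁻¹ * e ^ (1 - α) :=
          mul_le_mul_of_nonneg_left
            (Real.rpow_le_rpow hy21.le hy2e hα1'.le) (inv_nonneg.2 hepos.le)
        have c2 : e⁻¹ * e ^ (1 - α) = e ^ (-α) := by
          rw [← Real.rpow_neg_one e, ← Real.rpow_add hepos]
          congr 1; ring
        have c3 : e ^ (-α) ≤ d ^ (-α) :=
          Real.rpow_le_rpow_of_nonpos hdpos hde (by linarith)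
        have c4 : d⁻¹ * d ^ (-α) = d ^ (-(1 + α)) := by
          rw [← Real.rpow_neg_one d, ← Real.rpow_add hdpos]
          congr 1; ring
        have chalf : base / 2 ≤ d := by
          rw [hd_def]
          exact (Real.le_sqrt (by positivity) (by positivity)).2
            (by nlinarith [sq_abs (y.1 - x.1), sq_abs (y.2 - x.2),
              sq_nonneg (|y.1 - x.1| - |y.2 - x.2|)])
        have c5 : d ^ (-(1 + α)) ≤ (base / 2) ^ (-(1 + α)) :=
          Real.rpow_le_rpow_of_nonpos (by positivity) chalf (by linarith)
        have c6 : (base / 2) ^ (-(1 + α)) = base ^ (-(1 + α)) * (2:ℝ) ^ (1 + α) := by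
          rw [Real.div_rpow hbase.le (by norm_num : (0:ℝ) ≤ 2),
            Real.rpow_neg (by norm_num : (0:ℝ) ≤ 2), div_inv_eq_mul]
        have c7 : (2:ℝ) ^ (1 + α) ≤ 4 := by
          have ha : (2:ℝ) ^ α ≤ 2 ^ (1:ℝ) :=
            Real.rpow_le_rpow_of_exponent_le one_le_two hα1.le
          rw [Real.rpow_one] at ha
          rw [Real.rpow_add (by norm_num : (0:ℝ) < 2), Real.rpow_one]
          nlinarith
        calc d⁻¹ * (e⁻¹ * y.2 ^ (1 - α)) ≤ d⁻¹ * (e⁻¹ * e ^ (1 - α)) :=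
              mul_le_mul_of_nonneg_left c1 (inv_nonneg.2 hdpos.le)
          _ = d⁻¹ * e ^ (-α) := by rw [c2]
          _ ≤ d⁻¹ * d ^ (-α) := mul_le_mul_of_nonneg_left c3 (inv_nonneg.2 hdpos.le)
          _ = d ^ (-(1 + α)) := c4
          _ ≤ (base / 2) ^ (-(1 + α)) := c5
          _ = base ^ (-(1 + α)) * (2:ℝ) ^ (1 + α) := c6
          _ ≤ base ^ (-(1 + α)) * 4 :=
              mul_le_mul_of_nonneg_left c7 (Real.rpow_nonneg hbase.le _)
          _ = 4 * base ^ (-(1 + α)) := by ring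
      calc (C₀ * d⁻¹ * e⁻¹) * (M * y.2 ^ (1 - α))
          = (C₀ * M) * (d⁻¹ * (e⁻¹ * y.2 ^ (1 - α))) := by ring
        _ ≤ (C₀ * M) * (4 * base ^ (-(1 + α))) :=
            mul_le_mul_of_nonneg_left key (by positivity)
        _ = gfun y := by rw [hgdef]; simp only; rw [hKdef, hbase_def]; ring
  -- the integral estimate
  have hfinal : ∫ y in S, |G x y| * |ω y| ≤ (16 * C₀ / (α * (1 - α))) * M
      * (Real.sqrt (δ₁^2 + δ₂^2)) ^ (1 - α) := by
    have hsqrt : δ₂ ≤ Real.sqrt (δ₁^2 + δ₂^2) :=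
      (Real.le_sqrt (by linarith) (by positivity)).2 (by nlinarith)
    have hpow : δ₂ ^ (1 - α) ≤ (Real.sqrt (δ₁^2 + δ₂^2)) ^ (1 - α) :=
      Real.rpow_le_rpow (by linarith) hsqrt hα1'.le
    calc ∫ y in S, |G x y| * |ω y| ≤ ∫ y in S, gfun y := by
          refine integral_mono_of_nonneg ?_ hSint ?_
          · exact Filter.Eventually.of_forall fun y => mul_nonneg (abs_nonneg _) (abs_nonneg _)
          · exact (ae_restrict_iff' (measurableSet_Ioo.prod measurableSet_Ioo)).2
              (Filter.Eventually.of_forall hpoint)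
      _ ≤ ∫ y in Set.univ ×ˢ Set.Ioo (0:ℝ) δ₂, gfun y :=
          setIntegral_mono_set hT (Filter.Eventually.of_forall fun y => hgnn y)
            (HasSubset.Subset.eventuallyLE hSsub)
      _ = ∫ v in Set.Ioo (0:ℝ) δ₂, ∫ u, gfun (u, v) := by
          rw [hrestr]
          exact integral_prod_symm gfun hprod
      _ = ∫ v in Set.Ioo (0:ℝ) δ₂, (K * (2 / α)) * |v - x.2| ^ (-α) := by
          refine integral_congr_ae ?_
          filter_upwards [hne] with v hv
          have hb : 0 < |v - x.2| := abs_pos.2 (sub_ne_zero.2 hv)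
          simp only [hgdef]
          rw [MeasureTheory.integral_const_mul, (aux_inner hα0 x.1 _ hb).2]
          ring
      _ = (K * (2 / α)) * ∫ v in Set.Ioo (0:ℝ) δ₂, |v - x.2| ^ (-α) :=
          MeasureTheory.integral_const_mul _ _
      _ ≤ (K * (2 / α)) * (2 / (1 - α) * δ₂ ^ (1 - α)) :=
          mul_le_mul_of_nonneg_left (aux_outer hα0 hα1 hx21 hx22).2 (by positivity)
      _ = ((16 * C₀ / (α * (1 - α))) * M) * δ₂ ^ (1 - α) := by
          rw [hKdef]; field_simp; ring
      _ ≤ ((16 * C₀ / (α * (1 - α))) * M) * (Real.sqrt (δ₁^2 + δ₂^2)) ^ (1 - α) :=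
          mul_le_mul_of_nonneg_left hpow (by positivity)
      _ = (16 * C₀ / (α * (1 - α))) * M * (Real.sqrt (δ₁^2 + δ₂^2)) ^ (1 - α) := by ring
  exact hfinal
end
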